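/- Let Ã, Ã' be n×n symmetric real matrices with operator norms at most 1, let W₁, …, W_T be real matrices, σ a 1-Lipschitz function applied entrywise with σ(0)=0, and define layer maps H_{ℓ}(B) recursively by H₀(B) = H₀ and H_{ℓ+1}(B) = σ(B · H_ℓ(B) · W_{ℓ+1}) for B ∈ {Ã, Ã'}. Then ‖H_T(Ã') − H_T(Ã)‖₂ ≤ T · ‖Ã' − Ã‖₂ · (∏_{ℓ=1}^T ‖W_ℓ‖₂) · ‖H₀‖₂. -/

import Mathlib

/-!
Write `D_ℓ = H'_ℓ - H_ℓ`. Since `σ` is 1-Lipschitz entrywise and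
`Ã' H' W - Ã H W = (Ã' (H' - H) + (Ã' - Ã) H) W`, the mixed bounds
`‖X Y‖_F ≤ ‖X‖₂ ‖Y‖_F` and `‖Y X‖_F ≤ ‖Y‖_F ‖X‖₂` give
`‖D_{ℓ+1}‖_F ≤ (‖D_ℓ‖_F + ‖Ã' - Ã‖₂ ‖H_ℓ‖_F) ‖W_{ℓ+1}‖₂`.
As `‖Ã‖₂ ≤ 1` and `σ 0 = 0`, the unperturbed layers grow at most like
`‖H_ℓ‖_F ≤ (∏_{i ≤ ℓ} ‖W_i‖₂) ‖H₀‖_F`, so each layer adds one copy of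
`‖Ã' - Ã‖₂ (∏ ‖W_i‖₂) ‖H₀‖_F` and the recursion unrolls to `T` copies.
-/

open Finset Matrix

/-- Spectral (operator) norm of a real square matrix. -/
noncomputable def opN {n : ℕ} (M : Matrix (Fin n) (Fin n) ℝ) : ℝ :=
  ‖Matrix.toEuclideanCLM (𝕜 := ℝ) M‖

/-- Frobenius norm of a real square matrix. -/
noncomputable def frobN {n : ℕ} (M : Matrix (Fin n) (Fin n) ℝ) : ℝ :=
  Real.sqrt (∑ i, ∑ j, (M i j) ^ 2)

open scoped Matrix.Norms.Frobenius

namespace Matrix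

variable {𝕜 α β m n : Type*} [Fintype m] [Fintype n]

theorem frobenius_norm_sq_eq_sum_rows [SeminormedAddCommGroup α] (M : Matrix m n α) :
    ‖M‖ ^ 2 = ∑ i, ‖WithLp.toLp 2 (M i)‖ ^ 2 :=
  PiLp.norm_sq_eq_of_L2 _ (WithLp.toLp 2 fun i => WithLp.toLp 2 (M i))

theorem frobenius_norm_sq_eq [SeminormedAddCommGroup α] (M : Matrix m n α) :
    ‖M‖ ^ 2 = ∑ i, ∑ j, ‖M i j‖ ^ 2 := by
  simp only [frobenius_norm_sq_eq_sum_rows, PiLp.norm_sq_eq_of_L2]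

theorem frobenius_norm_map_sub_map_le [SeminormedAddCommGroup α] [SeminormedAddCommGroup β]
    {K : NNReal} {σ : α → β} (hσ : LipschitzWith K σ) (X Y : Matrix m n α) :
    ‖X.map σ - Y.map σ‖ ≤ K * ‖X - Y‖ := by
  refine le_of_sq_le_sq ?_ (by positivity)
  simp only [mul_pow, frobenius_norm_sq_eq, Finset.mul_sum]
  gcongr with i _ j _
  rw [← mul_pow]
  gcongr
  simpa only [sub_apply, map_apply, ← dist_eq_norm] using hσ.dist_le_mul (X i j) (Y i j)

theorem frobenius_norm_map_le [SeminormedAddCommGroup α] [SeminormedAddCommGroup β]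
    {K : NNReal} {σ : α → β} (hσ : LipschitzWith K σ) (hσ0 : σ 0 = 0) (X : Matrix m n α) :
    ‖X.map σ‖ ≤ K * ‖X‖ := by
  simpa [Matrix.map_zero σ hσ0] using frobenius_norm_map_sub_map_le hσ X 0

variable [RCLike 𝕜]

theorem frobenius_norm_mul_le_opNorm_mul [DecidableEq m] (A : Matrix m m 𝕜) (B : Matrix m n 𝕜) :
    ‖A * B‖ ≤ ‖toEuclideanCLM (𝕜 := 𝕜) A‖ * ‖B‖ := by
  rw [← frobenius_norm_transpose (A * B), ← frobenius_norm_transpose B]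
  refine le_of_sq_le_sq ?_ (by positivity)
  simp only [mul_pow, frobenius_norm_sq_eq_sum_rows, Finset.mul_sum]
  gcongr with j _
  have hcol : WithLp.toLp 2 ((A * B)ᵀ j) = toEuclideanCLM (𝕜 := 𝕜) A (WithLp.toLp 2 (Bᵀ j)) := by
    rw [toEuclideanCLM_toLp]; ext i; simp [mul_apply, mulVec, dotProduct]
  rw [hcol, ← mul_pow]
  gcongr
  exact (toEuclideanCLM (𝕜 := 𝕜) A).le_opNorm _

theorem frobenius_norm_mul_le_mul_opNorm [DecidableEq n] (B : Matrix m n 𝕜) (A : Matrix n n 𝕜) :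
    ‖B * A‖ ≤ ‖B‖ * ‖toEuclideanCLM (𝕜 := 𝕜) A‖ := by
  have hA : ‖toEuclideanCLM (𝕜 := 𝕜) Aᴴ‖ = ‖toEuclideanCLM (𝕜 := 𝕜) A‖ := by
    rw [← star_eq_conjTranspose, map_star, ContinuousLinearMap.star_eq_adjoint,
      LinearIsometryEquiv.norm_map]
  rw [← frobenius_norm_conjTranspose, conjTranspose_mul, ← frobenius_norm_conjTranspose B,
    mul_comm, ← hA]
  exact frobenius_norm_mul_le_opNorm_mul _ _

end Matrix

theorem le_nat_mul_mul_prod_of_le_add_mul {d w : ℕ → ℝ} {c : ℝ} (hw : ∀ ℓ, 0 ≤ w ℓ)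
    (hd0 : d 0 ≤ 0) (hd : ∀ ℓ, d (ℓ + 1) ≤ (d ℓ + c * ∏ i ∈ range ℓ, w (i + 1)) * w (ℓ + 1))
    (ℓ : ℕ) : d ℓ ≤ ℓ * c * ∏ i ∈ range ℓ, w (i + 1) := by
  induction ℓ with
  | zero => simpa using hd0
  | succ ℓ ih =>
    calc d (ℓ + 1) ≤ (d ℓ + c * ∏ i ∈ range ℓ, w (i + 1)) * w (ℓ + 1) := hd ℓ
      _ ≤ (ℓ * c * ∏ i ∈ range ℓ, w (i + 1) + c * ∏ i ∈ range ℓ, w (i + 1)) * w (ℓ + 1) := by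
          gcongr; exact hw _
      _ = (ℓ + 1 : ℕ) * c * ∏ i ∈ range (ℓ + 1), w (i + 1) := by
          rw [prod_range_succ]; push_cast; ring

section MessagePassing

variable {𝕜 ι κ : Type*} [RCLike 𝕜] [Fintype ι] [DecidableEq ι] [Fintype κ] [DecidableEq κ]
  {σ : 𝕜 → 𝕜}

theorem norm_map_mul_mul_le (hσ : LipschitzWith 1 σ) (hσ0 : σ 0 = 0) (B : Matrix ι ι 𝕜)
    (H : Matrix ι κ 𝕜) (W : Matrix κ κ 𝕜) :
    ‖(B * H * W).map σ‖ ≤ ‖toEuclideanCLM (𝕜 := 𝕜) B‖ * ‖H‖ * ‖toEuclideanCLM (𝕜 := 𝕜) W‖ := by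
  calc ‖(B * H * W).map σ‖ ≤ ‖B * H * W‖ := by
        simpa using frobenius_norm_map_le hσ hσ0 (B * H * W)
    _ ≤ ‖B * H‖ * ‖toEuclideanCLM (𝕜 := 𝕜) W‖ := frobenius_norm_mul_le_mul_opNorm _ _
    _ ≤ _ := by gcongr; exact frobenius_norm_mul_le_opNorm_mul _ _

theorem norm_map_mul_mul_sub_le (hσ : LipschitzWith 1 σ) (B B' : Matrix ι ι 𝕜)
    (H H' : Matrix ι κ 𝕜) (W : Matrix κ κ 𝕜) :
    ‖(B' * H' * W).map σ - (B * H * W).map σ‖ ≤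
      (‖toEuclideanCLM (𝕜 := 𝕜) B'‖ * ‖H' - H‖ + ‖toEuclideanCLM (𝕜 := 𝕜) (B' - B)‖ * ‖H‖) *
        ‖toEuclideanCLM (𝕜 := 𝕜) W‖ := by
  have hsplit : B' * H' * W - B * H * W = (B' * (H' - H) + (B' - B) * H) * W := by
    simp only [Matrix.mul_sub, Matrix.sub_mul, Matrix.add_mul]
    abel
  calc ‖(B' * H' * W).map σ - (B * H * W).map σ‖ ≤ ‖B' * H' * W - B * H * W‖ := by
        simpa using frobenius_norm_map_sub_map_le hσ (B' * H' * W) (B * H * W)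
    _ ≤ ‖B' * (H' - H) + (B' - B) * H‖ * ‖toEuclideanCLM (𝕜 := 𝕜) W‖ := by
        rw [hsplit]; exact frobenius_norm_mul_le_mul_opNorm _ _
    _ ≤ _ := by
        gcongr
        refine (norm_add_le _ _).trans (add_le_add ?_ ?_) <;>
          exact frobenius_norm_mul_le_opNorm_mul _ _

variable {B B' : Matrix ι ι 𝕜} {W : ℕ → Matrix κ κ 𝕜} {H H' : ℕ → Matrix ι κ 𝕜}

theorem norm_layer_le (hσ : LipschitzWith 1 σ) (hσ0 : σ 0 = 0)
    (hB : ‖toEuclideanCLM (𝕜 := 𝕜) B‖ ≤ 1)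
    (hH : ∀ ℓ, H (ℓ + 1) = (B * H ℓ * W (ℓ + 1)).map σ) (ℓ : ℕ) :
    ‖H ℓ‖ ≤ (∏ i ∈ range ℓ, ‖toEuclideanCLM (𝕜 := 𝕜) (W (i + 1))‖) * ‖H 0‖ := by
  induction ℓ with
  | zero => simp
  | succ ℓ ih =>
    calc ‖H (ℓ + 1)‖
        ≤ ‖toEuclideanCLM (𝕜 := 𝕜) B‖ * ‖H ℓ‖ * ‖toEuclideanCLM (𝕜 := 𝕜) (W (ℓ + 1))‖ := by
          rw [hH]; exact norm_map_mul_mul_le hσ hσ0 _ _ _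
      _ ≤ 1 * ((∏ i ∈ range ℓ, ‖toEuclideanCLM (𝕜 := 𝕜) (W (i + 1))‖) * ‖H 0‖) *
            ‖toEuclideanCLM (𝕜 := 𝕜) (W (ℓ + 1))‖ := by gcongr
      _ = _ := by rw [prod_range_succ]; ring

theorem norm_layer_sub_le (hσ : LipschitzWith 1 σ) (hσ0 : σ 0 = 0)
    (hB : ‖toEuclideanCLM (𝕜 := 𝕜) B‖ ≤ 1) (hB' : ‖toEuclideanCLM (𝕜 := 𝕜) B'‖ ≤ 1)
    (hH : ∀ ℓ, H (ℓ + 1) = (B * H ℓ * W (ℓ + 1)).map σ)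
    (hH' : ∀ ℓ, H' (ℓ + 1) = (B' * H' ℓ * W (ℓ + 1)).map σ) (h0 : H' 0 = H 0) (T : ℕ) :
    ‖H' T - H T‖ ≤ T * ‖toEuclideanCLM (𝕜 := 𝕜) (B' - B)‖ *
      (∏ ℓ ∈ range T, ‖toEuclideanCLM (𝕜 := 𝕜) (W (ℓ + 1))‖) * ‖H 0‖ := by
  have key := le_nat_mul_mul_prod_of_le_add_mul (d := fun ℓ => ‖H' ℓ - H ℓ‖)
    (w := fun ℓ => ‖toEuclideanCLM (𝕜 := 𝕜) (W ℓ)‖)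
    (c := ‖toEuclideanCLM (𝕜 := 𝕜) (B' - B)‖ * ‖H 0‖) (fun _ => norm_nonneg _)
    (by simp [h0]) (fun ℓ => ?_) T
  · calc ‖H' T - H T‖ ≤ _ := key
      _ = _ := by ring
  calc ‖H' (ℓ + 1) - H (ℓ + 1)‖
      ≤ (‖toEuclideanCLM (𝕜 := 𝕜) B'‖ * ‖H' ℓ - H ℓ‖ +
          ‖toEuclideanCLM (𝕜 := 𝕜) (B' - B)‖ * ‖H ℓ‖) *
        ‖toEuclideanCLM (𝕜 := 𝕜) (W (ℓ + 1))‖ := by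
        rw [hH, hH']; exact norm_map_mul_mul_sub_le hσ _ _ _ _ _
    _ ≤ (1 * ‖H' ℓ - H ℓ‖ + ‖toEuclideanCLM (𝕜 := 𝕜) (B' - B)‖ *
          ((∏ i ∈ range ℓ, ‖toEuclideanCLM (𝕜 := 𝕜) (W (i + 1))‖) * ‖H 0‖)) *
        ‖toEuclideanCLM (𝕜 := 𝕜) (W (ℓ + 1))‖ := by
        gcongr; exact norm_layer_le hσ hσ0 hB hH ℓ
    _ = _ := by ring

end MessagePassing

theorem frobN_eq_norm {n : ℕ} (M : Matrix (Fin n) (Fin n) ℝ) : frobN M = ‖M‖ := by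
  rw [frobN, ← Real.sqrt_sq (norm_nonneg M), Matrix.frobenius_norm_sq_eq]
  simp only [Real.norm_eq_abs, sq_abs]

theorem gnn_output_stability_under_operator_perturbation_general
    {n : ℕ} (A A' : Matrix (Fin n) (Fin n) ℝ)
    (hAn : opN A ≤ 1) (hA'n : opN A' ≤ 1)
    (W : ℕ → Matrix (Fin n) (Fin n) ℝ)
    (σ : ℝ → ℝ) (hσ : LipschitzWith 1 σ) (hσ0 : σ 0 = 0)
    (H₀ : Matrix (Fin n) (Fin n) ℝ)
    (H H' : ℕ → Matrix (Fin n) (Fin n) ℝ)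
    (hH0 : H 0 = H₀) (hH'0 : H' 0 = H₀)
    (hH : ∀ ℓ : ℕ, H (ℓ + 1) = (A * H ℓ * W (ℓ + 1)).map σ)
    (hH' : ∀ ℓ : ℕ, H' (ℓ + 1) = (A' * H' ℓ * W (ℓ + 1)).map σ)
    (T : ℕ) :
    frobN (H' T - H T)
      ≤ (T : ℝ) * opN (A' - A) * (∏ ℓ ∈ Finset.range T, opN (W (ℓ + 1)))
          * frobN H₀ := by
  subst hH0
  rw [frobN_eq_norm, frobN_eq_norm]
  exact norm_layer_sub_le hσ hσ0 hAn hA'n hH hH' hH'0 T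

/-- Lipschitz stability of a `T`-layer message-passing network: perturbing the
(symmetric, norm-≤1) propagation operator from `Ã` to `Ã'` changes the output
embeddings by at most `T · ‖Ã' − Ã‖₂ · ∏ ‖W_ℓ‖₂ · ‖H₀‖`. -/
theorem gnn_output_stability_under_operator_perturbation
    {n : ℕ} (A A' : Matrix (Fin n) (Fin n) ℝ)
    (hA : A.IsSymm) (hA' : A'.IsSymm)
    (hAn : opN A ≤ 1) (hA'n : opN A' ≤ 1)
    (W : ℕ → Matrix (Fin n) (Fin n) ℝ)
    (σ : ℝ → ℝ) (hσ : LipschitzWith 1 σ) (hσ0 : σ 0 = 0)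
    (H₀ : Matrix (Fin n) (Fin n) ℝ)
    (H H' : ℕ → Matrix (Fin n) (Fin n) ℝ)
    (hH0 : H 0 = H₀) (hH'0 : H' 0 = H₀)
    (hH : ∀ ℓ : ℕ, H (ℓ + 1) = (A * H ℓ * W (ℓ + 1)).map σ)
    (hH' : ∀ ℓ : ℕ, H' (ℓ + 1) = (A' * H' ℓ * W (ℓ + 1)).map σ)
    (T : ℕ) :
    frobN (H' T - H T)
      ≤ (T : ℝ) * opN (A' - A) * (∏ ℓ ∈ Finset.range T, opN (W (ℓ + 1)))
          * frobN H₀ :=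
  gnn_output_stability_under_operator_perturbation_general A A' hAn hA'n W σ hσ hσ0 H₀ H H' hH0 hH'0
    hH hH' T
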